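/- arXiv:1511.04291 — 2 statements merged into one kernel-verified Lean document; each statement's English description precedes it below -/
import Mathlib

section
/- Let G be a finite group acting faithfully on an abelian discrete 2-toral group D, and suppose G has no over-offenders on D. If A and B are two distinct commuting best offenders of order 2 on D, then C_D(A) ≠ C_D(B), and the group AB acts quadratically on D (i.e., [D, AB, AB] = 1). -/
open scoped Pointwise

/-- The Prüfer `p`-group, realized as the `p`-power torsion of `ℚ/ℤ`. -/
def Prufer (p : ℕ) : AddSubgroup (AddCircle (1 : ℚ)) where
  carrier := {x | ∃ n : ℕ, (p ^ n : ℕ) • x = 0}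
  zero_mem' := ⟨0, smul_zero _⟩
  add_mem' := by
    rintro a b ⟨m, hm⟩ ⟨n, hn⟩
    refine ⟨m + n, ?_⟩
    have h1 : (p ^ (m + n) : ℕ) • a = 0 := by
      rw [show p ^ (m + n) = p ^ n * p ^ m by ring, mul_smul, hm, smul_zero]
    have h2 : (p ^ (m + n) : ℕ) • b = 0 := by
      rw [show p ^ (m + n) = p ^ m * p ^ n by ring, mul_smul, hn, smul_zero]
    rw [smul_add, h1, h2, add_zero]
  neg_mem' := by
    rintro a ⟨m, hm⟩
    exact ⟨m, by rw [smul_neg, hm, neg_zero]⟩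

/-- `T` is a discrete `p`-torus: isomorphic to a finite direct power of the Prüfer `p`-group. -/
def IsPTorus (p : ℕ) (T : Type*) [Group T] : Prop :=
  ∃ r : ℕ, Nonempty (T ≃* Multiplicative (Fin r → Prufer p))

/-- `G` is a discrete `p`-toral group: it has a normal discrete `p`-torus of `p`-power index. -/
def IsDiscretePToral (p : ℕ) (G : Type*) [Group G] : Prop :=
  ∃ T : Subgroup G, T.Normal ∧ IsPTorus p ↥T ∧ ∃ k : ℕ, Nat.card (G ⧸ T) = p ^ k

/-- `G` is a virtually discrete `p`-toral group: it has a normal discrete `p`-torus of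
finite index. -/
def IsVirtuallyDiscretePToral (p : ℕ) (G : Type*) [Group G] : Prop :=
  ∃ T : Subgroup G, T.Normal ∧ IsPTorus p ↥T ∧ Finite (G ⧸ T)

/-- A subgroup is discrete `p`-toral. -/
def IsDiscretePToralSubgroup (p : ℕ) {G : Type*} [Group G] (H : Subgroup G) : Prop :=
  IsDiscretePToral p ↥H

/-- A Sylow `p`-subgroup of a virtually discrete `p`-toral group:
a maximal discrete `p`-toral subgroup. -/
def IsMaxDiscretePToralSubgroup (p : ℕ) {G : Type*} [Group G] (S : Subgroup G) : Prop :=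
  IsDiscretePToralSubgroup p S ∧
    ∀ P : Subgroup G, IsDiscretePToralSubgroup p P → S ≤ P → P = S

/-- The identity component `Γ₀`: the (unique maximal) discrete `p`-torus subgroup,
realized as the subgroup generated by all discrete `p`-torus subgroups. -/
def identityComponent (p : ℕ) (G : Type*) [Group G] : Subgroup G :=
  ⨆ T ∈ {T : Subgroup G | IsPTorus p ↥T}, T

/-- `Ω_n(D)`: the subgroup of elements of order dividing `p ^ n`. -/
def Omega (p n : ℕ) (D : Type*) [CommGroup D] : Subgroup D where
  carrier := {x | x ^ p ^ n = 1}
  one_mem' := one_pow _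
  mul_mem' := by
    intro a b ha hb
    simp only [Set.mem_setOf_eq] at *
    rw [mul_pow, ha, hb, one_mul]
  inv_mem' := by
    intro a ha
    simp only [Set.mem_setOf_eq] at *
    rw [inv_pow, ha, inv_one]

/-- `D₀` is the maximal divisible subgroup of `D`. -/
def IsMaxDivisible {D : Type*} [CommGroup D] (D₀ : Subgroup D) : Prop :=
  (∀ x ∈ D₀, ∀ n : ℕ, n ≠ 0 → ∃ y ∈ D₀, y ^ n = x) ∧
    ∀ E : Subgroup D, (∀ x ∈ E, ∀ n : ℕ, n ≠ 0 → ∃ y ∈ E, y ^ n = x) → E ≤ D₀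

/-- The subgroup of points of `D` fixed by every element of `A ⊆ G`. -/
def fixedSub (G : Type*) [Group G] (D : Type*) [Group D] [MulDistribMulAction G D]
    (A : Set G) : Subgroup D where
  carrier := {x | ∀ a ∈ A, a • x = x}
  one_mem' := fun a _ => smul_one a
  mul_mem' := by
    intro x y hx hy a ha
    rw [smul_mul', hx a ha, hy a ha]
  inv_mem' := by
    intro x hx a ha
    rw [smul_inv', hx a ha]

/-- The commutator `[W, A]` of a subgroup `W ≤ D` with a set `A ⊆ G` acting on `D`. -/
def actComm (G : Type*) [Group G] {D : Type*} [Group D] [MulDistribMulAction G D]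
    (A : Set G) (W : Subgroup D) : Subgroup D :=
  Subgroup.closure {x | ∃ w ∈ W, ∃ a ∈ A, x = w⁻¹ * a • w}

/-- `R` is a set of representatives for the (left) cosets of `H` inside `K`. -/
def IsRelTransversal {G : Type*} [Group G] (H K : Subgroup G) (R : Finset G) : Prop :=
  (↑R : Set G) ⊆ (K : Set G) ∧ ∀ g ∈ K, ∃! r, r ∈ R ∧ r⁻¹ * g ∈ H

/-- `A` is an offender of `G` on `D` (relative to the identity component `D₀`). -/
def IsOffender (p : ℕ) {G D : Type*} [Group G] [CommGroup D] [MulDistribMulAction G D]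
    (D₀ : Subgroup D) (A : Subgroup G) : Prop :=
  IsPGroup p ↥A ∧ (∀ x ∈ A, ∀ y ∈ A, x * y = y * x) ∧
    D₀ ≤ fixedSub G D (A : Set G) ∧
    (fixedSub G D (A : Set G)).index ≠ 0 ∧
    (fixedSub G D (A : Set G)).index ≤ Nat.card A

/-- `A` is a best offender of `G` on `D` (relative to the identity component `D₀`). -/
def IsBestOffender (p : ℕ) {G D : Type*} [Group G] [CommGroup D] [MulDistribMulAction G D]
    (D₀ : Subgroup D) (A : Subgroup G) : Prop :=
  IsPGroup p ↥A ∧ (∀ x ∈ A, ∀ y ∈ A, x * y = y * x) ∧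
    D₀ ≤ fixedSub G D (A : Set G) ∧
    ∀ B : Subgroup G, B ≤ A →
      Nat.card B * D₀.relIndex (fixedSub G D (B : Set G)) ≤
        Nat.card A * D₀.relIndex (fixedSub G D (A : Set G))

/-- `A` is an over-offender of `G` on `D`. -/
def IsOverOffender (p : ℕ) {G D : Type*} [Group G] [CommGroup D] [MulDistribMulAction G D]
    (D₀ : Subgroup D) (A : Subgroup G) : Prop :=
  IsBestOffender p D₀ A ∧
    D₀.index < Nat.card A * D₀.relIndex (fixedSub G D (A : Set G))

/-- `A` is a best offender of `G` on the invariant subgroup `W ≤ D` with identity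
component `W₀`. -/
def IsBestOffenderOn (p : ℕ) {G D : Type*} [Group G] [CommGroup D] [MulDistribMulAction G D]
    (W₀ W : Subgroup D) (A : Subgroup G) : Prop :=
  IsPGroup p ↥A ∧ (∀ x ∈ A, ∀ y ∈ A, x * y = y * x) ∧
    W₀ ≤ W ⊓ fixedSub G D (A : Set G) ∧
    ∀ B : Subgroup G, B ≤ A →
      Nat.card B * W₀.relIndex (W ⊓ fixedSub G D (B : Set G)) ≤
        Nat.card A * W₀.relIndex (W ⊓ fixedSub G D (A : Set G))

/-- `A` is an over-offender of `G` on the invariant subgroup `W ≤ D` with identity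
component `W₀`. -/
def IsOverOffenderOn (p : ℕ) {G D : Type*} [Group G] [CommGroup D] [MulDistribMulAction G D]
    (W₀ W : Subgroup D) (A : Subgroup G) : Prop :=
  IsBestOffenderOn p W₀ W A ∧
    W₀.relIndex W < Nat.card A * W₀.relIndex (W ⊓ fixedSub G D (A : Set G))

/-! Without over-offenders, comparing a best offender `A` with the trivial subgroup gives
`|D : D₀| = |A| · |C_D(A) : D₀|`; since `D₀` contains the divisible torus of `D`, it has finite
index, so `C_D(A)` has index `|A| = 2`. If `C_D(A) = C_D(B)`, the strictly larger group `AB` would have the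
same centralizer, and a best offender inside it would be an over-offender.

For `a ∈ A`, the map `d ↦ d⁻¹ (a • d)` is a homomorphism with kernel `C_D(a)`, so its image has
order `2`. Every element commuting with `a` preserves this image, and an automorphism of a group
of order `2` is trivial; hence `[D, AB] ≤ C_D(AB)`, which is quadratic action. -/

namespace Prufer

variable {p : ℕ} [hp : Fact p.Prime] {x : AddCircle (1 : ℚ)}

lemma exists_pow_nsmul_eq (hx : x ∈ Prufer p) (s : ℕ) :
    ∃ y ∈ Prufer p, (p ^ s : ℕ) • y = x := by
  obtain ⟨m, hm⟩ := hx
  obtain ⟨q, rfl⟩ := QuotientAddGroup.mk_surjective x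
  have hps : ((p ^ s : ℕ) : ℚ) ≠ 0 := by exact_mod_cast (pow_pos hp.out.pos s).ne'
  have hroot : (p ^ s : ℕ) • ((q / (p ^ s : ℕ) : ℚ) : AddCircle (1 : ℚ)) = q := by
    rw [← AddCircle.coe_nsmul, nsmul_eq_mul, mul_div_cancel₀ _ hps]
  refine ⟨_, ⟨m + s, ?_⟩, hroot⟩
  rw [pow_add, mul_comm, mul_nsmul, hroot]
  exact hm

lemma exists_nsmul_eq_of_not_dvd (hx : x ∈ Prufer p) {t : ℕ} (ht : ¬ p ∣ t) :
    ∃ y ∈ Prufer p, t • y = x := by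
  obtain ⟨m, hm⟩ := hx
  have hcop : t.Coprime (addOrderOf x) :=
    (((Nat.Prime.coprime_iff_not_dvd hp.out).2 ht).pow_left m).symm.coprime_dvd_right
      (addOrderOf_dvd_of_nsmul_eq_zero hm)
  obtain ⟨k, hk⟩ := exists_nsmul_eq_self_of_coprime hcop
  refine ⟨k • x, (Prufer p).nsmul_mem ⟨m, hm⟩ k, ?_⟩
  rwa [nsmul_left_comm]

lemma exists_nsmul_eq (hx : x ∈ Prufer p) {n : ℕ} (hn : n ≠ 0) :
    ∃ y ∈ Prufer p, n • y = x := by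
  obtain ⟨s, t, ht, rfl⟩ := Nat.exists_eq_pow_mul_and_not_dvd hn p hp.out.ne_one
  obtain ⟨z, hz, rfl⟩ := exists_nsmul_eq_of_not_dvd hx ht
  obtain ⟨y, hy, rfl⟩ := exists_pow_nsmul_eq hz s
  exact ⟨y, hy, by rw [mul_nsmul, nsmul_left_comm]⟩

end Prufer

lemma IsPTorus.exists_pow_eq {p : ℕ} [Fact p.Prime] {T : Type*} [Group T] (hT : IsPTorus p T)
    (x : T) {n : ℕ} (hn : n ≠ 0) : ∃ y : T, y ^ n = x := by
  obtain ⟨r, ⟨e⟩⟩ := hT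
  choose w hw hnw using fun i => Prufer.exists_nsmul_eq (Multiplicative.toAdd (e x) i).2 hn
  refine ⟨e.symm (Multiplicative.ofAdd fun i => ⟨w i, hw i⟩), e.injective ?_⟩
  rw [map_pow, MulEquiv.apply_symm_apply, ← ofAdd_nsmul]
  ext i
  exact hnw i

lemma IsMaxDivisible.index_ne_zero {p : ℕ} [Fact p.Prime] {D : Type*} [CommGroup D]
    {D₀ : Subgroup D} (hD₀ : IsMaxDivisible D₀) (hD : IsDiscretePToral p D) : D₀.index ≠ 0 := by
  obtain ⟨T, -, hT, k, hk⟩ := hD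
  have hTD₀ : T ≤ D₀ := hD₀.2 T fun x hx n hn => by
    obtain ⟨y, hy⟩ := hT.exists_pow_eq ⟨x, hx⟩ hn
    exact ⟨y, y.2, congrArg Subtype.val hy⟩
  refine ne_zero_of_dvd_ne_zero ?_ (Subgroup.index_dvd_of_le hTD₀)
  rw [Subgroup.index, hk]
  exact pow_ne_zero k (Fact.out : p.Prime).ne_zero

section FixedSub

variable {G D : Type*} [Group G] [Group D] [MulDistribMulAction G D]

lemma mem_fixedSub_iff_subset_stabilizer {S : Set G} {x : D} :
    x ∈ fixedSub G D S ↔ S ⊆ MulAction.stabilizer G x :=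
  Iff.rfl

lemma fixedSub_anti {S T : Set G} (h : S ⊆ T) : fixedSub G D T ≤ fixedSub G D S :=
  fun _ hx a ha => hx a (h ha)

@[simp]
lemma fixedSub_closure (S : Set G) :
    fixedSub G D (Subgroup.closure S) = fixedSub G D S := by
  ext x
  simp only [mem_fixedSub_iff_subset_stabilizer, SetLike.coe_subset_coe, Subgroup.closure_le]

lemma fixedSub_union (S T : Set G) :
    fixedSub G D (S ∪ T) = fixedSub G D S ⊓ fixedSub G D T := by
  ext x
  simp only [Subgroup.mem_inf, mem_fixedSub_iff_subset_stabilizer, Set.union_subset_iff]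

lemma fixedSub_sup (A B : Subgroup G) :
    fixedSub G D (A ⊔ B : Subgroup G) = fixedSub G D A ⊓ fixedSub G D B := by
  rw [Subgroup.sup_eq_closure, fixedSub_closure, fixedSub_union]

@[simp]
lemma fixedSub_bot : fixedSub G D (⊥ : Subgroup G) = ⊤ := by
  rw [← Subgroup.closure_empty, fixedSub_closure]
  exact eq_top_iff.2 fun x _ a ha => ha.elim

lemma actComm_eq_bot_of_le_fixedSub {S : Set G} {W : Subgroup D} (h : W ≤ fixedSub G D S) :
    actComm G S W = ⊥ := by
  rw [eq_bot_iff, actComm, Subgroup.closure_le]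
  rintro _ ⟨w, hw, a, ha, rfl⟩
  rw [h hw a ha, inv_mul_cancel]
  exact one_mem _

end FixedSub

lemma Subgroup.zpowers_eq_of_card_eq_prime {G : Type*} [Group G] {p : ℕ} [hp : Fact p.Prime]
    {A : Subgroup G} (hA : Nat.card A = p) {a : G} (ha : a ∈ A) (ha1 : a ≠ 1) :
    Subgroup.zpowers a = A := by
  have : Finite A := Nat.finite_of_card_ne_zero (hA ▸ hp.out.ne_zero)
  refine Subgroup.eq_of_le_of_card_ge (Subgroup.zpowers_le.2 ha) ?_
  have hdvd : orderOf a ∣ p := hA ▸ Subgroup.orderOf_dvd_natCard A ha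
  rw [Nat.card_zpowers, ((Nat.dvd_prime hp.out).1 hdvd).resolve_left (orderOf_eq_one_iff.not.2 ha1)]
  exact hA.le

lemma smul_eq_self_of_card_eq_two {G D : Type*} [Group G] [Group D] [MulDistribMulAction G D]
    {H : Subgroup D} (hH : Nat.card H = 2) {g : G} (hg : ∀ z ∈ H, g • z ∈ H) {z : D}
    (hz : z ∈ H) : g • z = z := by
  by_cases hz1 : z = 1
  · rw [hz1, smul_one]
  obtain ⟨y, -, hy⟩ := (Nat.card_eq_two_iff' (1 : H)).1 hH
  have hgz1 : g • z ≠ 1 := fun h => hz1 (by rwa [← smul_one g, smul_left_cancel_iff] at h)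
  have hz' := hy ⟨z, hz⟩ (by simpa [Subtype.ext_iff] using hz1)
  have hgz' := hy ⟨g • z, hg z hz⟩ (by simpa [Subtype.ext_iff] using hgz1)
  exact congrArg Subtype.val (hgz'.trans hz'.symm)

section CommutatorMap

variable {G D : Type*} [Group G] [CommGroup D] [MulDistribMulAction G D]

def commutatorMap (a : G) : D →* D where
  toFun d := d⁻¹ * a • d
  map_one' := by simp
  map_mul' x y := by
    simp only [mul_inv, smul_mul']
    exact mul_mul_mul_comm x⁻¹ y⁻¹ (a • x) (a • y)

@[simp]
lemma commutatorMap_apply (a : G) (d : D) : commutatorMap a d = d⁻¹ * a • d := rfl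

lemma commutatorMap_mul (a b : G) (d : D) :
    commutatorMap (a * b) d = commutatorMap a d * a • commutatorMap b d := by
  simp only [commutatorMap_apply, smul_mul', smul_inv', mul_smul]
  group

lemma commutatorMap_inv (a : G) (d : D) :
    commutatorMap a⁻¹ d = (commutatorMap a (a⁻¹ • d))⁻¹ := by
  simp [mul_comm]

lemma ker_commutatorMap (a : G) : (commutatorMap (D := D) a).ker = fixedSub G D {a} := by
  ext d
  rw [MonoidHom.mem_ker, commutatorMap_apply, inv_mul_eq_one, eq_comm]
  simp [fixedSub]

lemma Commute.smul_commutatorMap {a b : G} (h : Commute a b) (d : D) :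
    b • commutatorMap a d = commutatorMap a (b • d) := by
  simp only [commutatorMap_apply, smul_mul', smul_inv', ← mul_smul, h.eq]

lemma range_commutatorMap_le_fixedSub {a : G} (h2 : (fixedSub G D {a}).index = 2) {S : Set G}
    (hS : ∀ b ∈ S, Commute a b) : (commutatorMap (D := D) a).range ≤ fixedSub G D S := by
  have hcard : Nat.card (commutatorMap (D := D) a).range = 2 := by
    rw [← Subgroup.index_ker, ker_commutatorMap, h2]
  intro z hz b hb
  refine smul_eq_self_of_card_eq_two hcard ?_ hz
  rintro _ ⟨d, rfl⟩
  exact ⟨b • d, ((hS b hb).smul_commutatorMap d).symm⟩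

lemma commutatorMap_mem_of_mem_closure {S : Set G} {F : Subgroup D}
    (hF : F ≤ fixedSub G D (Subgroup.closure S)) (hS : ∀ s ∈ S, ∀ d, commutatorMap s d ∈ F)
    {g : G} (hg : g ∈ Subgroup.closure S) (d : D) : commutatorMap g d ∈ F := by
  induction hg using Subgroup.closure_induction generalizing d with
  | mem s hs => exact hS s hs d
  | one => simp
  | mul a b ha _ iha ihb =>
    rw [commutatorMap_mul, hF (ihb d) a ha]
    exact mul_mem (iha d) (ihb d)
  | inv a _ iha =>
    rw [commutatorMap_inv]
    exact inv_mem (iha _)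

end CommutatorMap

lemma Subgroup.sup_mul_comm {G : Type*} [Group G] {A B : Subgroup G}
    (hA : ∀ x ∈ A, ∀ y ∈ A, x * y = y * x) (hB : ∀ x ∈ B, ∀ y ∈ B, x * y = y * x)
    (hAB : ∀ a ∈ A, ∀ b ∈ B, a * b = b * a) :
    ∀ x ∈ A ⊔ B, ∀ y ∈ A ⊔ B, x * y = y * x := by
  have hAA : A ≤ centralizer A := fun x hx => mem_centralizer_iff.2 fun y hy => hA y hy x hx
  have hBB : B ≤ centralizer B := fun x hx => mem_centralizer_iff.2 fun y hy => hB y hy x hx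
  have hBA : B ≤ centralizer A := fun b hb => mem_centralizer_iff.2 fun a ha => hAB a ha b hb
  have hcent : A ⊔ B ≤ centralizer (A ⊔ B : Subgroup G) :=
    sup_le (le_centralizer_iff.2 (sup_le hAA hBA))
      (le_centralizer_iff.2 (sup_le (le_centralizer_iff.1 hBA) hBB))
  exact fun x hx y hy => mem_centralizer_iff.1 (hcent hy) x hx

section Offender

variable {G D : Type*} [Group G] [CommGroup D] [MulDistribMulAction G D] {p : ℕ}
  {D₀ : Subgroup D}

lemma IsBestOffender.index_eq {A : Subgroup G} (hA : IsBestOffender p D₀ A)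
    (hno : ¬ IsOverOffender p D₀ A) :
    D₀.index = Nat.card A * D₀.relIndex (fixedSub G D A) := by
  have hbot := hA.2.2.2 ⊥ bot_le
  rw [Subgroup.card_bot, one_mul, fixedSub_bot, Subgroup.relIndex_top_right] at hbot
  exact le_antisymm hbot (not_lt.1 fun hlt => hno ⟨hA, hlt⟩)

lemma IsBestOffender.index_fixedSub {A : Subgroup G} (hA : IsBestOffender p D₀ A)
    (hno : ¬ IsOverOffender p D₀ A) (h0 : D₀.index ≠ 0) :
    (fixedSub G D A).index = Nat.card A := by
  have hrel := Subgroup.relIndex_mul_index hA.2.2.1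
  rw [hA.index_eq hno, mul_comm (Nat.card A)] at hrel
  refine Nat.eq_of_mul_eq_mul_left (Nat.pos_of_ne_zero fun hr => h0 ?_) hrel
  rw [hA.index_eq hno, hr, mul_zero]

lemma exists_isBestOffender_le [Finite G] {H : Subgroup G} (hH : IsPGroup p H)
    (hcomm : ∀ x ∈ H, ∀ y ∈ H, x * y = y * x) (hD₀ : D₀ ≤ fixedSub G D H) :
    ∃ B ≤ H, IsBestOffender p D₀ B ∧
      Nat.card H * D₀.relIndex (fixedSub G D H) ≤ Nat.card B * D₀.relIndex (fixedSub G D B) := by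
  obtain ⟨B, hBH, hmax⟩ := Set.exists_max_image {X : Subgroup G | X ≤ H}
    (fun X => Nat.card X * D₀.relIndex (fixedSub G D X)) (Set.toFinite _) ⟨H, le_refl H⟩
  exact ⟨B, hBH, ⟨hH.to_le hBH, fun x hx y hy => hcomm x (hBH hx) y (hBH hy),
    hD₀.trans (fixedSub_anti hBH), fun X hX => hmax X (hX.trans hBH)⟩, hmax H (le_refl H)⟩

lemma card_mul_relIndex_le_index [Finite G] (hno : ∀ A : Subgroup G, ¬ IsOverOffender p D₀ A)
    {H : Subgroup G} (hH : IsPGroup p H) (hcomm : ∀ x ∈ H, ∀ y ∈ H, x * y = y * x)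
    (hD₀ : D₀ ≤ fixedSub G D H) : Nat.card H * D₀.relIndex (fixedSub G D H) ≤ D₀.index := by
  obtain ⟨B, -, hB, hHB⟩ := exists_isBestOffender_le hH hcomm hD₀
  exact hHB.trans (hB.index_eq (hno B)).ge

theorem fixedSub_ne_of_isBestOffender [Finite G] (hno : ∀ A : Subgroup G, ¬ IsOverOffender p D₀ A)
    (h0 : D₀.index ≠ 0) {A B : Subgroup G} (hA : IsBestOffender p D₀ A)
    (hB : IsBestOffender p D₀ B) (hcard : Nat.card A = Nat.card B)
    (hcomm : ∀ a ∈ A, ∀ b ∈ B, a * b = b * a) (hne : A ≠ B) :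
    fixedSub G D A ≠ fixedSub G D B := by
  intro hfix
  have hsup : fixedSub G D (A ⊔ B : Subgroup G) = fixedSub G D A := by
    rw [fixedSub_sup, ← hfix, inf_idem]
  have hpgroup : IsPGroup p (A ⊔ B : Subgroup G) :=
    hA.1.to_sup_of_normal_right' hB.1 fun a ha => Subgroup.centralizer_le_normalizer _ <|
      Subgroup.mem_centralizer_iff.2 fun b hb => (hcomm a ha b hb).symm
  have hle := card_mul_relIndex_le_index hno hpgroup
    (Subgroup.sup_mul_comm hA.2.1 hB.2.1 hcomm) (hsup ▸ hA.2.2.1)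
  rw [hsup, hA.index_eq (hno A)] at hle
  have hsupA : Nat.card (A ⊔ B : Subgroup G) ≤ Nat.card A :=
    Nat.le_of_mul_le_mul_right hle <| Nat.pos_of_ne_zero fun hr => h0 <| by
      rw [hA.index_eq (hno A), hr, mul_zero]
  have hBA : B ≤ A := le_sup_right.trans (Subgroup.eq_of_le_of_card_ge le_sup_left hsupA).ge
  exact hne (Subgroup.eq_of_le_of_card_ge hBA hcard.le).symm

end Offender

section Quadratic

variable {G D : Type*} [Group G] [CommGroup D] [MulDistribMulAction G D]

lemma commutatorMap_mem_fixedSub_of_card_eq_two {A : Subgroup G} (hA : Nat.card A = 2)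
    (hAi : (fixedSub G D A).index = 2) {S : Set G} (hS : ∀ a ∈ A, ∀ b ∈ S, Commute a b)
    {a : G} (ha : a ∈ A) (d : D) : commutatorMap a d ∈ fixedSub G D S := by
  by_cases ha1 : a = 1
  · simp [ha1]
  have hfix : fixedSub G D {a} = fixedSub G D A := by
    rw [← Subgroup.zpowers_eq_of_card_eq_prime hA ha ha1, Subgroup.zpowers_eq_closure,
      fixedSub_closure]
  exact range_commutatorMap_le_fixedSub (hfix ▸ hAi) (hS a ha) ⟨d, rfl⟩

lemma actComm_sup_le_fixedSub {A B : Subgroup G} (hA : Nat.card A = 2) (hB : Nat.card B = 2)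
    (hAi : (fixedSub G D A).index = 2) (hBi : (fixedSub G D B).index = 2)
    (hcomm : ∀ x ∈ A ⊔ B, ∀ y ∈ A ⊔ B, x * y = y * x) :
    actComm G (A ⊔ B : Subgroup G) ⊤ ≤ fixedSub G D (A ⊔ B : Subgroup G) := by
  rw [actComm, Subgroup.closure_le]
  rintro _ ⟨d, -, g, hg, rfl⟩
  rw [SetLike.mem_coe, Subgroup.sup_eq_closure] at hg
  refine commutatorMap_mem_of_mem_closure (by rw [Subgroup.sup_eq_closure]) ?_ hg d
  rintro s (hs | hs) d
  · exact commutatorMap_mem_fixedSub_of_card_eq_two hA hAi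
      (fun a ha b hb => hcomm a (Subgroup.mem_sup_left ha) b hb) hs d
  · exact commutatorMap_mem_fixedSub_of_card_eq_two hB hBi
      (fun a ha b hb => hcomm a (Subgroup.mem_sup_right ha) b hb) hs d

end Quadratic

theorem commuting_best_offenders_quadratic_general {G D : Type*} [Group G] [Finite G]
    [CommGroup D] [MulDistribMulAction G D]
    (hD : IsDiscretePToral 2 D) (D₀ : Subgroup D) (hD₀ : IsMaxDivisible D₀)
    (hno : ∀ A' : Subgroup G, ¬ IsOverOffender 2 D₀ A')
    (A B : Subgroup G) (hA : IsBestOffender 2 D₀ A) (hB : IsBestOffender 2 D₀ B)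
    (hcA : Nat.card A = 2) (hcB : Nat.card B = 2)
    (hcomm : ∀ a ∈ A, ∀ b ∈ B, a * b = b * a) (hne : A ≠ B) :
    fixedSub G D (A : Set G) ≠ fixedSub G D (B : Set G) ∧
      actComm G ((A ⊔ B : Subgroup G) : Set G)
        (actComm G ((A ⊔ B : Subgroup G) : Set G) (⊤ : Subgroup D)) = ⊥ := by
  have h0 : D₀.index ≠ 0 := hD₀.index_ne_zero hD
  have hAi : (fixedSub G D A).index = 2 := (hA.index_fixedSub (hno A) h0).trans hcA
  have hBi : (fixedSub G D B).index = 2 := (hB.index_fixedSub (hno B) h0).trans hcB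
  exact ⟨fixedSub_ne_of_isBestOffender hno h0 hA hB (hcA.trans hcB.symm) hcomm hne,
    actComm_eq_bot_of_le_fixedSub <| actComm_sup_le_fixedSub hcA hcB hAi hBi <|
      Subgroup.sup_mul_comm hA.2.1 hB.2.1 hcomm⟩

/-- Suppose the finite group `G` acts faithfully on the abelian
discrete `2`-toral group `D` with no over-offenders.  If `A ≠ B` are commuting best
offenders of order `2` on `D`, then `C_D(A) ≠ C_D(B)` and `A·B` acts quadratically
on `D`. -/
theorem commuting_best_offenders_quadratic {G D : Type*} [Group G] [Finite G]
    [CommGroup D] [MulDistribMulAction G D] [FaithfulSMul G D]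
    (hD : IsDiscretePToral 2 D) (D₀ : Subgroup D) (hD₀ : IsMaxDivisible D₀)
    (hno : ∀ A' : Subgroup G, ¬ IsOverOffender 2 D₀ A')
    (A B : Subgroup G) (hA : IsBestOffender 2 D₀ A) (hB : IsBestOffender 2 D₀ B)
    (hcA : Nat.card A = 2) (hcB : Nat.card B = 2)
    (hcomm : ∀ a ∈ A, ∀ b ∈ B, a * b = b * a) (hne : A ≠ B) :
    fixedSub G D (A : Set G) ≠ fixedSub G D (B : Set G) ∧
      actComm G ((A ⊔ B : Subgroup G) : Set G)
        (actComm G ((A ⊔ B : Subgroup G) : Set G) (⊤ : Subgroup D)) = ⊥ :=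
  commuting_best_offenders_quadratic_general hD D₀ hD₀ hno A B hA hB hcA hcB hcomm hne
end

section
/- Let W be a conjugacy functor for a fusion system F over a discrete p-toral group S, and P ≤ S. Then: (a) N_S(P) ≤ N_S(W(P)); (b) W(P) = W(N_S(W(P))) if and only if W(P) = W(S); and (c) N_S(W(P)) = P if and only if P = S. -/
open scoped Pointwise

/-- A fusion system over a (discrete `p`-toral) group `S`: a collection of injective
group homomorphisms between subgroups of `S` (recorded as homomorphisms into `S`),
containing all conjugation maps and closed under composition, restriction and
inverses of isomorphisms. -/
structure FusionSystem (S : Type*) [Group S] where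
  /-- `IsMor P φ` means `φ : P → S` is a morphism of the fusion system
  (with target the subgroup `φ.range`). -/
  IsMor : (P : Subgroup S) → (↥P →* S) → Prop
  inj : ∀ (P : Subgroup S) (φ : ↥P →* S), IsMor P φ → Function.Injective φ
  conj_isMor : ∀ (P : Subgroup S) (g : S),
    IsMor P ((MulAut.conj g).toMonoidHom.comp P.subtype)
  comp_isMor : ∀ (P Q : Subgroup S) (φ : ↥P →* S) (ψ : ↥Q →* S)
    (h : ∀ x : ↥P, φ x ∈ Q), IsMor P φ → IsMor Q ψ →
    IsMor P (ψ.comp (φ.codRestrict Q h))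
  restrict_isMor : ∀ (P P' : Subgroup S) (h : P' ≤ P) (φ : ↥P →* S),
    IsMor P φ → IsMor P' (φ.comp (Subgroup.inclusion h))
  inv_isMor : ∀ (P Q : Subgroup S) (φ : ↥P →* S), IsMor P φ → φ.range = Q →
    ∃ ψ : ↥Q →* S, IsMor Q ψ ∧ ∀ (x : ↥P) (hx : φ x ∈ Q), ψ ⟨φ x, hx⟩ = x

namespace FusionSystem

variable {S : Type*} [Group S] (F : FusionSystem S)

/-- `Q` is `F`-conjugate to `P`. -/
def IsConjTo (Q P : Subgroup S) : Prop :=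
  ∃ φ : ↥Q →* S, F.IsMor Q φ ∧ φ.range = P

end FusionSystem

/-- `W` is an `F`-conjugacy functor. -/
def IsConjugacyFunctor {S : Type*} [Group S] (F : FusionSystem S)
    (W : Subgroup S → Subgroup S) : Prop :=
  (∀ P : Subgroup S, W P ≤ P) ∧
    (∀ P : Subgroup S, P ≠ ⊥ → W P ≠ ⊥) ∧
    ∀ (P : Subgroup S) (φ : ↥P →* S), F.IsMor P φ →
      ((W P).subgroupOf P).map φ = W φ.range

/-!
Everything rests on the fact that a proper subgroup `H` of a discrete `p`-toral group `S` is
proper in its normalizer. Suppose `H < L` with `[L : H]` finite. The `p`-group `H` acts on the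
finite set `L / H`, whose size is a nontrivial power of `p`, so it fixes a coset `xH ≠ H`;
then `x⁻¹ H x ≤ H`, and since `x` has finite order, `x` normalizes `H`. Take `L = S` when `H`
contains the torus `T`. Otherwise pick `t ∈ T \ H`: its conjugacy class is finite because `T`
centralizes `t` and has finite index, so its normal closure `U` is a finitely generated abelian
torsion group, hence finite, and `L = U H` works. Part (a) holds because `W` commutes with
conjugation, and (b) and (c) follow from (a) and the normalizer property.
-/

lemma isPGroup_multiplicative_pi_prufer (p : ℕ) (ι : Type*) [Fintype ι] :
    IsPGroup p (Multiplicative (ι → Prufer p)) := by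
  intro f
  choose n hn using fun i => (f.toAdd i).2
  refine ⟨∑ i, n i, Multiplicative.toAdd.injective (funext fun i => Subtype.ext ?_)⟩
  obtain ⟨c, hc⟩ := Nat.pow_dvd_pow p (Finset.single_le_sum (fun j _ => Nat.zero_le (n j))
    (Finset.mem_univ i))
  simp only [toAdd_pow, toAdd_one, Pi.smul_apply, Pi.zero_apply, AddSubgroup.coe_nsmul,
    AddSubgroup.coe_zero, hc, mul_comm _ c, mul_smul, hn i, smul_zero]

namespace IsPTorus

variable {p : ℕ} {T : Type*} [Group T]

lemma isPGroup (hT : IsPTorus p T) : IsPGroup p T :=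
  let ⟨r, ⟨e⟩⟩ := hT
  (isPGroup_multiplicative_pi_prufer p (Fin r)).of_equiv e.symm

lemma isMulCommutative (hT : IsPTorus p T) : IsMulCommutative T :=
  let ⟨_, ⟨e⟩⟩ := hT
  ⟨⟨fun x y => e.injective (by rw [map_mul, map_mul, mul_comm])⟩⟩

end IsPTorus

lemma IsDiscretePToral.isPGroup {p : ℕ} {S : Type*} [Group S] (hS : IsDiscretePToral p S) :
    IsPGroup p S := by
  obtain ⟨T, hTn, hT, k, hk⟩ := hS
  intro g
  obtain ⟨j, hj⟩ := IsPGroup.of_card hk (g : S ⧸ T)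
  rw [← QuotientGroup.mk_pow, QuotientGroup.eq_one_iff] at hj
  obtain ⟨m, hm⟩ := hT.isPGroup ⟨_, hj⟩
  exact ⟨j + m, by rw [pow_add, pow_mul]; exact congrArg Subtype.val hm⟩

namespace Subgroup

variable {G : Type*} [Group G]

theorem mem_normalizer_of_isOfFinOrder {H : Subgroup G} {x : G} (hx : IsOfFinOrder x)
    (hconj : ∀ y ∈ H, x * y * x⁻¹ ∈ H) : x ∈ normalizer (H : Set G) := by
  have hpow : ∀ k : ℕ, ∀ y ∈ H, x ^ k * y * (x ^ k)⁻¹ ∈ H := by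
    intro k
    induction k with
    | zero => simp
    | succ k ih =>
      intro y hy
      simpa [pow_succ', mul_assoc] using hconj _ (ih y hy)
  have hinv : x ^ (orderOf x - 1) = x⁻¹ := by
    rw [eq_inv_iff_mul_eq_one, ← pow_succ, Nat.sub_add_cancel hx.orderOf_pos, pow_orderOf_eq_one]
  refine mem_normalizer_iff.mpr fun y => ⟨hconj y, fun hy => ?_⟩
  simpa [hinv, mul_assoc] using hpow (orderOf x - 1) _ hy

theorem finite_conjugatesOf {g : G} [(centralizer {g}).FiniteIndex] : (conjugatesOf g).Finite := by
  refine (Set.finite_range fun q : G ⧸ centralizer {g} => q.out * g * q.out⁻¹).subset ?_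
  intro c hc
  obtain ⟨a, rfl⟩ := isConj_iff.mp hc
  obtain ⟨⟨z, hz⟩, hout⟩ := QuotientGroup.mk_out_eq_mul (centralizer {g}) a
  refine ⟨a, ?_⟩
  rw [mem_centralizer_singleton_iff] at hz
  simp only [hout, mul_inv_rev, ← mul_assoc]
  rw [mul_assoc a z g, hz]
  group

theorem finite_normalClosure_singleton {T : Subgroup G} [T.Normal] [IsMulCommutative T]
    [T.FiniteIndex] (hG : IsMulTorsion G) {t : G} (ht : t ∈ T) :
    Finite (normalClosure ({t} : Set G)) := by
  have : (centralizer {t}).FiniteIndex := finiteIndex_of_le fun x hx =>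
    mem_centralizer_singleton_iff.mpr (setLike_mul_comm hx ht)
  have : Finite (conjugatesOf t) := finite_conjugatesOf.to_subtype
  have hU : normalClosure {t} = closure (conjugatesOf t) := by
    simp [normalClosure, Group.conjugatesOfSet]
  have hUT : normalClosure {t} ≤ T := normalClosure_le_normal (Set.singleton_subset_iff.mpr ht)
  have : IsMulCommutative (normalClosure ({t} : Set G)) :=
    .of_setLike_mul_comm fun a ha b hb => setLike_mul_comm (hUT ha) (hUT hb)
  have : Group.FG (normalClosure ({t} : Set G)) := hU ▸ inferInstance
  open scoped IsMulCommutative in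
  exact CommGroup.finite_of_fg_isMulTorsion _ (hG.subgroup _)

theorem finiteIndex_subgroupOf_sup {N : Subgroup G} [N.Normal] [Finite N] (H : Subgroup G) :
    (H.subgroupOf (N ⊔ H)).FiniteIndex := by
  let K := N ⊔ H
  suffices Finite (K ⧸ H.subgroupOf K) from finiteIndex_of_finite_quotient
  refine Finite.of_surjective
    (fun n : N => ((⟨n, mem_sup_left n.2⟩ : K) : K ⧸ H.subgroupOf K)) ?_
  rintro ⟨⟨x, hx⟩⟩
  rw [← SetLike.mem_coe, normal_mul] at hx
  obtain ⟨n, hn, h, hh, rfl⟩ := Set.mem_mul.mp hx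
  exact ⟨⟨n, hn⟩, QuotientGroup.eq.mpr (by simpa [mem_subgroupOf] using hh)⟩

end Subgroup

namespace IsPGroup

variable {p : ℕ} [Fact p.Prime] {G : Type*} [Group G] (hG : IsPGroup p G)
include hG

theorem lt_normalizer {H : Subgroup G} [H.FiniteIndex] (hH : H ≠ ⊤) :
    H < Subgroup.normalizer (H : Set G) := by
  have hp_dvd_card : p ∣ Nat.card (G ⧸ H) := by
    obtain ⟨n, hn⟩ := hG.index H
    have hn0 : n ≠ 0 := by
      rintro rfl
      exact hH (Subgroup.index_eq_one.mp hn)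
    rw [← Subgroup.index, hn]
    exact dvd_pow_self p hn0
  have hfix_one : ((1 : G) : G ⧸ H) ∈ MulAction.fixedPoints H (G ⧸ H) := fun h =>
    show ((h * 1 : G) : G ⧸ H) = _ from QuotientGroup.eq.mpr (by simp)
  obtain ⟨b, hb, hne⟩ :=
    (hG.to_subgroup H).exists_fixed_point_of_prime_dvd_card_of_fixed_point _ hp_dvd_card hfix_one
  obtain ⟨x, rfl⟩ := QuotientGroup.mk_surjective b
  have hxH : x ∉ H := fun hx => hne (QuotientGroup.eq.mpr (by simpa using hx))
  have hconj : ∀ y ∈ H, x⁻¹ * y * x⁻¹⁻¹ ∈ H := fun y hy => by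
    have hfix : ((y⁻¹ * x : G) : G ⧸ H) = x := hb ⟨y⁻¹, inv_mem hy⟩
    simpa [mul_assoc] using QuotientGroup.eq.mp hfix
  refine SetLike.lt_iff_le_and_exists.mpr ⟨Subgroup.le_normalizer, x, ?_, hxH⟩
  simpa using inv_mem (Subgroup.mem_normalizer_of_isOfFinOrder (hG.isOfFinOrder
    (Fact.out : p.Prime).ne_zero x⁻¹) hconj)

theorem lt_normalizer_of_lt {H K : Subgroup G} (hHK : H < K) [(H.subgroupOf K).FiniteIndex] :
    H < Subgroup.normalizer (H : Set G) := by
  have hH : H.subgroupOf K ≠ ⊤ := fun h => hHK.not_ge (Subgroup.subgroupOf_eq_top.mp h)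
  have := (hG.to_subgroup K).lt_normalizer hH
  rw [← Subgroup.subgroupOf_normalizer_eq hHK.le] at this
  obtain ⟨x, hxN, hxH⟩ := (SetLike.lt_iff_le_and_exists.mp this).2
  exact SetLike.lt_iff_le_and_exists.mpr ⟨Subgroup.le_normalizer, (x : G),
    Subgroup.mem_subgroupOf.mp hxN, fun h => hxH (Subgroup.mem_subgroupOf.mpr h)⟩

end IsPGroup

open Subgroup in
theorem IsDiscretePToral.lt_normalizer {p : ℕ} [hp : Fact p.Prime] {S : Type*} [Group S]
    (hS : IsDiscretePToral p S) {H : Subgroup S} (hH : H ≠ ⊤) :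
    H < normalizer (H : Set S) := by
  have hSp := hS.isPGroup
  obtain ⟨T, hTn, hT, k, hk⟩ := hS
  have : T.FiniteIndex := ⟨by rw [index, hk]; exact pow_ne_zero k hp.out.ne_zero⟩
  by_cases hTH : T ≤ H
  · have := finiteIndex_of_le hTH
    exact hSp.lt_normalizer hH
  · obtain ⟨t, htT, htH⟩ := SetLike.not_le_iff_exists.mp hTH
    have := hT.isMulCommutative
    have : Finite (normalClosure {t}) :=
      finite_normalClosure_singleton (hSp.isOfFinOrder hp.out.ne_zero) htT
    have hlt : H < normalClosure {t} ⊔ H := lt_of_le_of_ne le_sup_right fun h =>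
      htH (h ▸ mem_sup_left (subset_normalClosure rfl))
    have := finiteIndex_subgroupOf_sup (N := normalClosure {t}) H
    exact hSp.lt_normalizer_of_lt hlt

namespace IsConjugacyFunctor

variable {S : Type*} [Group S] {F : FusionSystem S} {W : Subgroup S → Subgroup S}

theorem map_conj (hW : IsConjugacyFunctor F W) (P : Subgroup S) (g : S) :
    (W P).map (MulAut.conj g).toMonoidHom = W (P.map (MulAut.conj g).toMonoidHom) := by
  have := hW.2.2 P _ (F.conj_isMor P g)
  rwa [MonoidHom.range_comp, Subgroup.range_subtype, ← Subgroup.map_map,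
    Subgroup.subgroupOf_map_subtype, inf_of_le_left (hW.1 P)] at this

theorem normalizer_le (hW : IsConjugacyFunctor F W) (P : Subgroup S) :
    Subgroup.normalizer (P : Set S) ≤ Subgroup.normalizer (W P : Set S) := fun g hg => by
  rw [Subgroup.mem_normalizer_iff_map_conj_eq] at hg ⊢
  exact (hW.map_conj P g).trans (congrArg W hg)

end IsConjugacyFunctor

/-- For an `F`-conjugacy functor `W` over a discrete `p`-toral group
`S` and `P ≤ S`: (a) `N_S(P) ≤ N_S(W(P))`; (b) `W(P) = W(N_S(W(P)))` iff
`W(P) = W(S)`; (c) `N_S(W(P)) = P` iff `P = S`. -/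
theorem conjugacy_functor_normalizer_props (p : ℕ) (hp : p.Prime) {S : Type*} [Group S]
    (hS : IsDiscretePToral p S) (F : FusionSystem S)
    (W : Subgroup S → Subgroup S) (hW : IsConjugacyFunctor F W) (P : Subgroup S) :
    Subgroup.normalizer (P : Set S) ≤ Subgroup.normalizer (W P : Set S) ∧
      (W P = W (Subgroup.normalizer (W P : Set S)) ↔ W P = W ⊤) ∧
      (Subgroup.normalizer (W P : Set S) = P ↔ P = ⊤) := by
  have : Fact p.Prime := ⟨hp⟩
  have hself : ∀ H : Subgroup S, Subgroup.normalizer (H : Set S) ≤ H → H = ⊤ := fun H hH =>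
    by_contra fun hne => (hS.lt_normalizer hne).not_ge hH
  have hWtop : Subgroup.normalizer (W ⊤ : Set S) = ⊤ :=
    top_le_iff.mp ((Subgroup.normalizer_eq_top_iff.mpr inferInstance).ge.trans
      (hW.normalizer_le ⊤))
  refine ⟨hW.normalizer_le P, ⟨fun hb => ?_, fun hb => by rw [hb, hWtop]⟩,
    fun hc => hself P ((hW.normalizer_le P).trans_eq hc), by rintro rfl; exact hWtop⟩
  have hN := hself _ ((hW.normalizer_le _).trans_eq (by rw [← hb]))
  rwa [hN] at hb
end
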